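/- arXiv:0911.4724 — 2 statements merged into one kernel-verified Lean document; each statement's English description precedes it below -/
import Mathlib

section
/- Dickson's theorem: for any symmetric matrix B over Z_2 of size n with zero diagonal, there exists an invertible matrix R ∈ GL(n, Z_2) and h ≤ n/2 such that R B Rᵗ is the block-diagonal matrix consisting of h copies of the 2×2 matrix [[0,1],[1,0]] followed by an (n−2h)×(n−2h) zero block. -/
/-!
A nonzero alternating form has a pair `u, w` with `Φ u w = 1`. Its Gram matrix on `span {u, w}`
is `!![0, 1; -1, 0]`, so the form is nondegenerate there and `V` splits as that plane plus its
orthogonal, on which we recurse. In characteristic 2 the block is `[[0,1],[1,0]]`. A symmetric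
matrix over `ZMod 2` with zero diagonal is the Gram matrix of an alternating form on
`Fin n → ZMod 2`, and `R` is the transpose of the change-of-basis matrix to the normal-form basis.
-/

open Matrix

/-- `h` copies of `!![0, 1; 1, 0]` followed by a zero block: the partner of `i < 2 * h` is
`i ^^^ 1`. -/
def hyperbolicNormalForm (R : Type*) [Zero R] [One R] (n h : ℕ) : Matrix (Fin n) (Fin n) R :=
  of fun i j => if i.val < 2 * h ∧ j.val = i.val ^^^ 1 then 1 else 0

lemma Nat.two_add_xor_one (k : ℕ) : (2 + k) ^^^ 1 = 2 + (k ^^^ 1) := by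
  rcases Nat.even_or_odd k with hk | hk
  · rw [Nat.xor_one_of_even hk, Nat.xor_one_of_even (by simpa [Nat.even_add] using hk)]
    omega
  · rw [Nat.xor_one_of_odd hk, Nat.xor_one_of_odd (by simpa [Nat.odd_add'] using hk)]
    have := hk.pos
    omega

namespace hyperbolicNormalForm

variable (R : Type*) [Zero R] [One R]

theorem zero_right (n : ℕ) : hyperbolicNormalForm R n 0 = 0 := by
  ext i j
  simp [hyperbolicNormalForm]

theorem two_one : hyperbolicNormalForm R 2 1 = !![0, 1; 1, 0] := by
  ext i j
  fin_cases i <;> fin_cases j <;> rfl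

theorem two_add_succ (m h : ℕ) :
    hyperbolicNormalForm R (2 + m) (h + 1) =
      reindex finSumFinEquiv finSumFinEquiv
        (fromBlocks (hyperbolicNormalForm R 2 1) 0 0 (hyperbolicNormalForm R m h)) := by
  ext i j
  obtain ⟨i | k, rfl⟩ := finSumFinEquiv.surjective i <;>
  obtain ⟨j | l, rfl⟩ := finSumFinEquiv.surjective j
  · fin_cases i <;> fin_cases j <;> simp [hyperbolicNormalForm]; omega
  · fin_cases i <;> simp [hyperbolicNormalForm]; omega
  · simp only [hyperbolicNormalForm, reindex_apply, submatrix_apply, Equiv.symm_apply_apply]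
    simp [Nat.two_add_xor_one]
    exact fun _ hj => absurd (hj ▸ j.isLt) (Nat.not_lt.2 (Nat.le_add_right 2 _))
  · simp [hyperbolicNormalForm, Nat.two_add_xor_one, show 2 * (h + 1) = 2 + 2 * h by ring]

end hyperbolicNormalForm

theorem Matrix.isAlt_toBilin' {R ι : Type*} [CommRing R] [CharP R 2] [Fintype ι] [DecidableEq ι]
    {B : Matrix ι ι R} (hB : B.IsSymm) (hdiag : ∀ i, B i i = 0) : B.toBilin'.IsAlt := by
  intro x
  rw [toBilin'_apply, ← Finset.sum_product']
  refine Finset.sum_ninvolution Prod.swap (fun p => ?_) (fun p hp => ?_) (by simp) (by simp)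
  · simp only [Prod.fst_swap, Prod.snd_swap]
    linear_combination x p.2 * x p.1 * hB.apply p.1 p.2 +
      x p.1 * B p.1 p.2 * x p.2 * CharTwo.two_eq_zero (R := R)
  · intro heq
    rw [← congrArg Prod.fst heq, Prod.fst_swap, hdiag, mul_zero, zero_mul] at hp
    exact hp rfl

namespace LinearMap.BilinForm

open Module

section CommRing

variable {R M : Type*} [CommRing R] [AddCommGroup M] [Module R M] {Φ : LinearMap.BilinForm R M}
  {ι κ : Type*} [Fintype ι] [DecidableEq ι] [Fintype κ] [DecidableEq κ]

theorem toMatrix_basis_reindex (b : Basis ι R M) (e : ι ≃ κ) :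
    toMatrix (b.reindex e) Φ = reindex e e (toMatrix b Φ) := by
  ext i j
  simp [toMatrix_apply]

theorem toMatrix_map_prodEquivOfIsCompl_orthogonal {p : Submodule R M}
    (hp : IsCompl p (Φ.orthogonal p)) (hΦ : Φ.IsRefl) (b₁ : Basis ι R p)
    (b₂ : Basis κ R (Φ.orthogonal p)) :
    toMatrix ((b₁.prod b₂).map (p.prodEquivOfIsCompl _ hp)) Φ =
      fromBlocks (toMatrix b₁ (Φ.restrict p)) 0 0 (toMatrix b₂ (Φ.restrict (Φ.orthogonal p))) := by
  ext (i | i) (j | j)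
  all_goals simp [toMatrix_apply, Submodule.coe_prodEquivOfIsCompl']
  · exact (b₂ j).2 _ (b₁ i).2
  · exact hΦ _ _ ((b₂ i).2 _ (b₁ j).2)

namespace IsAlt

variable {u w : M}

theorem linearIndependent_pair (hΦ : Φ.IsAlt) (huw : Φ u w = 1) :
    LinearIndependent R ![u, w] := by
  rw [LinearIndependent.pair_iff]
  intro s t hst
  have hu := congrArg (Φ u) hst
  have hw := congrArg (Φ w) hst
  simp [hΦ.self_eq_zero, huw, ← hΦ.neg_eq u w] at hu hw
  exact ⟨hw, hu⟩

theorem toMatrix_basisSpan_pair (hΦ : Φ.IsAlt) (huw : Φ u w = 1) :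
    toMatrix (Basis.span (hΦ.linearIndependent_pair huw)) (Φ.restrict _) = !![0, 1; -1, 0] := by
  ext i j
  fin_cases i <;> fin_cases j <;>
    simp [toMatrix_apply, Basis.span_apply, hΦ.self_eq_zero, huw, ← hΦ.neg_eq u w]

end IsAlt

end CommRing

namespace IsAlt

variable {K V : Type*} [Field K] [CharP K 2] [AddCommGroup V] [Module K V]
  [FiniteDimensional K V]

theorem exists_basis_toMatrix_eq_hyperbolicNormalForm {Φ : LinearMap.BilinForm K V}
    (hΦ : Φ.IsAlt) {n : ℕ} (hn : finrank K V = n) :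
    ∃ (b : Basis (Fin n) K V) (h : ℕ), 2 * h ≤ n ∧ toMatrix b Φ = hyperbolicNormalForm K n h := by
  induction n using Nat.strong_induction_on generalizing V with | _ n ih =>
  by_cases hzero : Φ = 0
  · refine ⟨(finBasis K V).reindex (finCongr hn), 0, Nat.zero_le _, ?_⟩
    rw [hzero, map_zero, hyperbolicNormalForm.zero_right]
  obtain ⟨u, w, huw⟩ : ∃ u w, Φ u w = 1 := by
    obtain ⟨u, w, huw⟩ : ∃ u w, Φ u w ≠ 0 := by
      by_contra! h
      exact hzero (LinearMap.ext₂ h)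
    exact ⟨u, (Φ u w)⁻¹ • w, by simp [huw]⟩
  set p := Submodule.span K (Set.range ![u, w])
  set b₁ : Basis (Fin 2) K p := Basis.span (hΦ.linearIndependent_pair huw)
  have hb₁ : toMatrix b₁ (Φ.restrict _) = !![0, 1; -1, 0] := hΦ.toMatrix_basisSpan_pair huw
  have hp := isCompl_orthogonal_of_restrict_nondegenerate hΦ.isRefl
    ((nondegenerate_iff_det_ne_zero b₁).2 (by simp [hb₁]))
  have hfinrank := Submodule.finrank_add_eq_of_isCompl hp
  rw [finrank_eq_card_basis b₁, Fintype.card_fin, hn] at hfinrank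
  obtain ⟨m, rfl⟩ : ∃ m, n = 2 + m := ⟨n - 2, by omega⟩
  obtain ⟨b₂, h, hh, hb₂⟩ :=
    ih m (by omega) (Φ := Φ.restrict (Φ.orthogonal p)) (fun x => hΦ x) (by omega)
  refine ⟨((b₁.prod b₂).map (Submodule.prodEquivOfIsCompl _ _ hp)).reindex finSumFinEquiv, h + 1,
    by omega, ?_⟩
  rw [toMatrix_basis_reindex, toMatrix_map_prodEquivOfIsCompl_orthogonal hp hΦ.isRefl, hb₁, hb₂,
    hyperbolicNormalForm.two_add_succ, hyperbolicNormalForm.two_one, CharTwo.neg_eq]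

end IsAlt

end LinearMap.BilinForm

/-- Dickson's theorem: a symmetric matrix over `Z_2` with zero diagonal is congruent
to a direct sum of `h` copies of `[[0,1],[1,0]]` and a zero block. The `i`-th row of
the canonical form has a `1` exactly in column `i ^^^ 1` (its partner in the pair),
provided `i < 2*h`. -/
theorem dickson (n : ℕ) (B : Matrix (Fin n) (Fin n) (ZMod 2))
    (hsymm : B.IsSymm) (hdiag : ∀ i, B i i = 0) :
    ∃ (R : Matrix (Fin n) (Fin n) (ZMod 2)) (h : ℕ), IsUnit R ∧ 2 * h ≤ n ∧
      R * B * Rᵀ = Matrix.of (fun i j : Fin n =>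
        if i.val < 2 * h ∧ j.val = i.val ^^^ 1 then 1 else 0) := by
  obtain ⟨b, h, hh, hb⟩ :=
    (isAlt_toBilin' hsymm hdiag).exists_basis_toMatrix_eq_hyperbolicNormalForm
      (Module.finrank_fin_fun (ZMod 2))
  let P := (Pi.basisFun (ZMod 2) (Fin n)).toMatrix b
  let _ : Invertible P := (Pi.basisFun (ZMod 2) (Fin n)).invertibleToMatrix b
  refine ⟨Pᵀ, h, isUnit_of_invertible Pᵀ, hh, ?_⟩
  rw [transpose_transpose, ← LinearMap.BilinForm.toMatrix'_toBilin' B,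
    ← LinearMap.BilinForm.toMatrix_basisFun, LinearMap.BilinForm.toMatrix_mul_basis_toMatrix, hb]
  rfl
end

section
/- Let f(x) = xQxᵗ + Lxᵗ be a quadratic Boolean function on Z_2^n with Q upper triangular with zero diagonal, and suppose B = Q + Qᵗ has full rank n. Then f is bent. -/
/-!
Write the Walsh sum of `g x = w ⬝ᵥ x + f x` as `S = ∑ₓ (-1)^{g x}`. Expanding `S²` and substituting
`y = x + h` gives `S² = ∑ₕ (-1)^{g h} ∑ₓ (-1)^{⟪B h, x⟫}`, because in characteristic two
`g x + g (x + h) = g h + ⟪B h, x⟫` with `B = Q + Qᵀ`. The inner character sum vanishes unless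
`B h = 0`, i.e. unless `h = 0` since `B` is invertible, so `S² = 2ⁿ`.
-/

open Finset Matrix

/-- Fourier coefficient of the Boolean function `f` at frequency `w`. -/
noncomputable def fhat {n : ℕ} (f : (Fin n → ZMod 2) → ZMod 2) (w : Fin n → ZMod 2) : ℝ :=
  (2 ^ n : ℝ)⁻¹ * ∑ x : Fin n → ZMod 2, (-1 : ℝ) ^ ((w ⬝ᵥ x + f x).val)

noncomputable def signChar : AddChar (ZMod 2) ℝ where
  toFun a := (-1) ^ a.val
  map_zero_eq_one' := pow_zero _
  map_add_eq_mul' a b := by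
    rw [ZMod.val_add, ← pow_add]
    exact (neg_one_pow_eq_pow_mod_two _).symm

lemma signChar_apply (a : ZMod 2) : signChar a = (-1) ^ a.val := rfl

lemma signChar_injective : Function.Injective signChar := by
  have h10 : signChar 1 ≠ signChar 0 := by norm_num [signChar_apply, ZMod.val_one]
  have hcases : ∀ a : ZMod 2, a = 0 ∨ a = 1 := by decide
  intro a b hab
  rcases hcases a with rfl | rfl <;> rcases hcases b with rfl | rfl
  all_goals first | rfl | exact absurd hab h10 | exact absurd hab.symm h10

lemma sum_signChar_addMonoidHom {V : Type*} [AddCommGroup V] [Fintype V]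
    (f : V →+ ZMod 2) : ∑ x, signChar (f x) = if f = 0 then (Fintype.card V : ℝ) else 0 := by
  have hzero : signChar.compAddMonoidHom f = 0 ↔ f = 0 := by
    have hcomp_zero : signChar.compAddMonoidHom (0 : V →+ ZMod 2) = 0 := by ext; simp
    rw [← hcomp_zero, (AddChar.compAddMonoidHom_injective_right signChar signChar_injective).eq_iff]
  simp_rw [← AddChar.compAddMonoidHom_apply signChar f, AddChar.sum_eq_ite, hzero]

theorem sq_sum_signChar_eq_card {V : Type*} [AddCommGroup V] [Fintype V]
    (g : V → ZMod 2) (β : V → V →+ ZMod 2) (hg : ∀ x h, g (x + h) = g x + g h + β h x)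
    (hβ : ∀ h, β h = 0 → h = 0) :
    (∑ x, signChar (g x)) ^ 2 = Fintype.card V := by
  classical
  have hg0 : g 0 = 0 := by simpa using hg 0 0
  have hβ0 : β 0 = 0 := AddMonoidHom.ext fun x => by simpa [hg0] using hg x 0
  have hβ_eq_zero : ∀ h, β h = 0 ↔ h = 0 := fun h => ⟨hβ h, by rintro rfl; exact hβ0⟩
  calc (∑ x, signChar (g x)) ^ 2
      = ∑ x, ∑ h, signChar (g x) * signChar (g (x + h)) := by
        rw [sq, sum_mul_sum]
        exact sum_congr rfl fun x _ =>
          (Equiv.sum_comp (Equiv.addLeft x) fun y => signChar (g x) * signChar (g y)).symm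
    _ = ∑ h, signChar (g h) * ∑ x, signChar (β h x) := by
        rw [sum_comm]
        refine sum_congr rfl fun h _ => ?_
        rw [mul_sum]
        refine sum_congr rfl fun x _ => ?_
        rw [← AddChar.map_add_eq_mul, ← AddChar.map_add_eq_mul, hg, ← add_assoc, ← add_assoc,
          CharTwo.add_self_eq_zero, zero_add]
    _ = Fintype.card V := by
        simp [sum_signChar_addMonoidHom, hβ_eq_zero, hg0]

theorem Matrix.mulVec_injective_of_rank_eq_card {m K : Type*} [Fintype m] [DecidableEq m]
    [Field K] {A : Matrix m m K} (h : A.rank = Fintype.card m) : Function.Injective A.mulVec := by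
  have hsurj : Function.Surjective A.mulVecLin := by
    rw [← LinearMap.range_eq_top]
    apply Submodule.eq_top_of_finrank_eq
    rw [Module.finrank_fintype_fun_eq_card]
    exact h
  exact LinearMap.injective_iff_surjective.mpr hsurj

theorem Matrix.add_dotProduct_mulVec_add {m R : Type*} [Fintype m] [CommSemiring R]
    (Q : Matrix m m R) (x h : m → R) :
    (x + h) ⬝ᵥ Q *ᵥ (x + h) = x ⬝ᵥ Q *ᵥ x + h ⬝ᵥ Q *ᵥ h + (Q + Qᵀ) *ᵥ h ⬝ᵥ x := by
  have htranspose : Qᵀ *ᵥ h ⬝ᵥ x = h ⬝ᵥ Q *ᵥ x := by rw [mulVec_transpose, dotProduct_mulVec]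
  rw [add_mulVec, add_dotProduct (Q *ᵥ h), htranspose, dotProduct_comm _ x]
  simp only [mulVec_add, add_dotProduct, dotProduct_add]
  ring

theorem abs_fhat_eq_of_sq_sum_signChar {n : ℕ} (f : (Fin n → ZMod 2) → ZMod 2)
    (w : Fin n → ZMod 2) (h : (∑ x, signChar (w ⬝ᵥ x + f x)) ^ 2 = 2 ^ n) :
    |fhat f w| = (Real.sqrt 2 ^ n)⁻¹ := by
  have hpow : (2 : ℝ) ^ n = (Real.sqrt 2 ^ n) ^ 2 := by
    rw [← pow_mul, mul_comm, pow_mul, Real.sq_sqrt zero_le_two]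
  have habs : |∑ x, signChar (w ⬝ᵥ x + f x)| = Real.sqrt 2 ^ n :=
    (sq_eq_sq₀ (abs_nonneg _) (by positivity)).1 (by rw [sq_abs, h, hpow])
  change |(2 ^ n : ℝ)⁻¹ * ∑ x, signChar (w ⬝ᵥ x + f x)| = _
  rw [abs_mul, habs, abs_inv, abs_pow, abs_two, hpow]
  field_simp

theorem quadratic_full_rank_bent_general (n : ℕ) (Q : Matrix (Fin n) (Fin n) (ZMod 2))
    (L : Fin n → ZMod 2) (hrank : (Q + Qᵀ).rank = n) :
    ∀ w, |fhat (fun x => x ⬝ᵥ Q.mulVec x + L ⬝ᵥ x) w| = (Real.sqrt 2 ^ n)⁻¹ := by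
  intro w
  have hB : Function.Injective (Q + Qᵀ).mulVec :=
    mulVec_injective_of_rank_eq_card (by simpa using hrank)
  apply abs_fhat_eq_of_sq_sum_signChar
  have hsq := sq_sum_signChar_eq_card (fun x => w ⬝ᵥ x + (x ⬝ᵥ Q *ᵥ x + L ⬝ᵥ x))
    (fun h => (dotProductEquiv (ZMod 2) (Fin n) ((Q + Qᵀ) *ᵥ h)).toAddMonoidHom) ?_ ?_
  · simpa using hsq
  · intro x h
    simp only [dotProduct_add, add_dotProduct_mulVec_add, LinearMap.toAddMonoidHom_coe,
      dotProductEquiv_apply_apply]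
    ring
  · intro h hβ
    have hBh : (Q + Qᵀ) *ᵥ h = 0 := dotProduct_eq_zero _ fun x => DFunLike.congr_fun hβ x
    exact hB (hBh.trans (mulVec_zero _).symm)

/-- A quadratic Boolean function `f(x) = x Q xᵗ + L xᵗ` whose associated symplectic
matrix `B = Q + Qᵗ` has full rank is a bent function. -/
theorem quadratic_full_rank_bent (n : ℕ) (Q : Matrix (Fin n) (Fin n) (ZMod 2))
    (L : Fin n → ZMod 2) (hQ : ∀ i j : Fin n, j ≤ i → Q i j = 0)
    (hrank : (Q + Qᵀ).rank = n) :
    ∀ w, |fhat (fun x => x ⬝ᵥ Q.mulVec x + L ⬝ᵥ x) w| = (Real.sqrt 2 ^ n)⁻¹ :=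
  quadratic_full_rank_bent_general n Q L hrank
end
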